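/- In the total complex of $\mathcal{L}^{\mathbb{Q}}_{T^n}(\mathbb{Q}[t];\mathbb{Q})$, for all $k \geq 1$: $(t^k)_{\mathbf{1}_n} \sim \sum \prod_{i=1}^k t_{\mathbf{w}_i}$, where the sum runs over all $k$-tuples $(\mathbf{w}_1, \ldots, \mathbf{w}_k)$ of nonzero coordinates in $\{0,1\}^n$ with $\mathbf{w}_1 + \cdots + \mathbf{w}_k = \mathbf{1}_n$. In particular: (a) if $k = n$ then $(t^n)_{\mathbf{1}_n} \sim n! \prod_{i=1}^n t_{\mathbf{e}_i}$ where $\mathbf{e}_i$ is the $i$-th standard unit coordinate (the diagonal class maps to $n!$ times the volume form); and (b) if $k > n$ then $(t^k)_{\mathbf{1}_n} \sim 0$. -/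

import Mathlib

/-!
The multisimplicial Loday complex `𝓛^ℚ_{Tⁿ}(ℚ[t]; ℚ)` of the `n`-torus with reduced
coefficients, in the multidegrees needed for the moving lemmas.

A chain in multidegree `𝟏ₙ + eᵢ`-or-lower is a `ℚ`-linear combination of monomial
multi-matrices with entries powers of `t` (entry `ℚ` at the basepoint coordinate `𝟎ₙ`);
such a monomial is recorded by its exponent multi-matrix, a finitely supported function
`e : (Fin n → ℕ) → ℕ` (the exponent of `t` at each coordinate) with `e 𝟎 = 0`.  Chains
form the monoid algebra `Ch n` of these exponent matrices (multiplication of monomials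
adds exponents coordinatewise, matching multiplication of multi-matrices).  `elem v x` is
the multi-matrix `x_𝐯` with `x ∈ ℚ[t]` at coordinate `𝐯` and `1` elsewhere (so
`elem 𝟎 t = 0`: `t` acts as `0` on the coefficient copy of `ℚ`).  `D i j` is the `j`-th
face map of the simplicial circle in the `i`-th direction (for circle-degree `2 → 1`),
`del i = D i 0 - D i 1 + D i 2` the corresponding differential, `Deg b` the chains of
multidegree (entrywise) at most `b`, and `Homologous x y` says the difference `x - y` is
a boundary coming from total multidegree `n + 1`, i.e. from the multidegrees `𝟏ₙ + eᵢ`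
(in the directions `i'` with multidegree `1` the cyclic differentials vanish).
-/

/-- Coordinates of a multi-matrix. -/
abbrev Coord (n : ℕ) := Fin n → ℕ

/-- Exponent multi-matrices: the exponent at the basepoint coordinate `𝟎` is `0`. -/
noncomputable def ExpM (n : ℕ) : AddSubmonoid ((Coord n) →₀ ℕ) where
  carrier := {e | e 0 = 0}
  add_mem' := by intro a b ha hb; simp_all
  zero_mem' := by simp

/-- Chains of the (reduced-coefficient) multisimplicial Loday complex of `ℚ[t]`. -/
abbrev Ch (n : ℕ) := AddMonoidAlgebra ℚ (ExpM n)

/-- The monomial with a single `t` at coordinate `v` (zero if `v` is the basepoint,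
since `t` acts as `0` on the coefficients `ℚ`). -/
noncomputable def tv {n : ℕ} (v : Coord n) : Ch n :=
  if h : v = 0 then 0
  else AddMonoidAlgebra.single ⟨Finsupp.single v 1, Finsupp.single_eq_of_ne (Ne.symm h)⟩ 1

/-- `elem v x = x_𝐯`: the multi-matrix with `x ∈ ℚ[t]` at coordinate `v`, `1` elsewhere. -/
noncomputable def elem {n : ℕ} (v : Coord n) (x : Polynomial ℚ) : Ch n :=
  Polynomial.aeval (tv v) x

/-- The `j`-th face map of the simplicial circle `S¹` from simplicial degree `2` to
degree `1`, on coordinates `{0,1,2} → {0,1}` (`0` the basepoint). -/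
def cface (j c : ℕ) : ℕ := (if 3 ≤ j + c then c - 1 else c) % 2

/-- The `j`-th face in direction `i` on coordinates. -/
def phi {n : ℕ} (i : Fin n) (j : ℕ) (c : Coord n) : Coord n :=
  Function.update c i (cface j (c i))

/-- Face of a monomial: push exponents forward along `phi i j` (adding exponents that
land at the same coordinate = multiplying the entries over each fiber); if a positive
exponent lands on the basepoint the result is `0` (reduced coefficients). -/
noncomputable def Dsingle {n : ℕ} (i : Fin n) (j : ℕ) (e : ExpM n) : Ch n :=
  if h : (Finsupp.mapDomain (phi i j) (e : Coord n →₀ ℕ)) 0 = 0 then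
    AddMonoidAlgebra.single ⟨Finsupp.mapDomain (phi i j) (e : Coord n →₀ ℕ), h⟩ 1
  else 0

/-- The `j`-th face map in direction `i`, extended linearly to chains. -/
noncomputable def D {n : ℕ} (i : Fin n) (j : ℕ) (a : Ch n) : Ch n :=
  Finsupp.sum a.coeff fun e q => q • Dsingle i j e

/-- The simplicial differential in direction `i` (from multidegree `𝟏ₙ + eᵢ`). -/
noncomputable def del {n : ℕ} (i : Fin n) (a : Ch n) : Ch n :=
  D i 0 a - D i 1 a + D i 2 a

/-- The monomial `e` lies in the box of multidegree `b`. -/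
def inBox {n : ℕ} (b : Coord n) (e : ExpM n) : Prop :=
  ∀ c ∈ (e : Coord n →₀ ℕ).support, ∀ i, c i ≤ b i

/-- Chains of multidegree (entrywise at most) `b`. -/
noncomputable def Deg {n : ℕ} (b : Coord n) : Submodule ℚ (Ch n) :=
  Submodule.span ℚ {x | ∃ e : ExpM n, inBox b e ∧ x = AddMonoidAlgebra.single e 1}

/-- Boundaries in multidegree `𝟏ₙ`: images of the total differential on chains of the
multidegrees `𝟏ₙ + eᵢ` (in directions of multidegree `1` the cyclic differentials
vanish, so the total differential is `± del i` there). -/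
noncomputable def bdry (n : ℕ) : Submodule ℚ (Ch n) :=
  Submodule.span ℚ {x | ∃ (i : Fin n) (z : Ch n),
    z ∈ Deg (Function.update (fun _ => 1) i 2) ∧ x = del i z}

/-- Two chains of multidegree `𝟏ₙ` are homologous if their difference is a boundary. -/
def Homologous {n : ℕ} (x y : Ch n) : Prop := x - y ∈ bdry n

/-!
The face maps in direction `i` are algebra maps with `t_v ↦ t_{φ v}`. Hence, for `0/1`-vectors
`v₀, …, v_{k-1}` and a pattern `c ∈ {0,1,2}ᵏ` multiplying the `i`-th coordinates, the faces of
`∏ₘ t_{vₘ}` with pattern `c` are the same products with `c` pushed through the face maps of the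
circle. For `c = (1,…,1,2,0,…,0)` these boundaries telescope, and the chain with `c = 0` is its
own boundary, so the `i`-th coordinate of `∏ₘ t_{vₘ}` can be moved into a single factor, in all
`k` ways. Doing this for every coordinate expands `t_𝟏ᵏ` into `∑_{g : Fin n → Fin k} ∏ₘ t_{g⁻¹(m)}`.
A term with `g` not surjective contains the factor `t_𝟎 = 0`; the surjective `g` are the tuples
`(𝐰₁, …, 𝐰ₖ)` of the statement, and for `k = n` they are the permutations.
-/

section

variable {n k : ℕ}

lemma tv_zero : tv (0 : Coord n) = 0 := dif_pos rfl

lemma elem_X (v : Coord n) : elem v Polynomial.X = tv v := Polynomial.aeval_X _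

lemma elem_X_pow (v : Coord n) (k : ℕ) : elem v (Polynomial.X ^ k) = tv v ^ k := by
  simp [elem]

lemma Dsingle_zero (i : Fin n) (j : ℕ) : Dsingle i j (0 : ExpM n) = 1 := by
  rw [Dsingle, dif_pos (by simp)]
  rfl

lemma Dsingle_add (i : Fin n) (j : ℕ) (e e' : ExpM n) :
    Dsingle i j (e + e') = Dsingle i j e * Dsingle i j e' := by
  have hmap : Finsupp.mapDomain (phi i j) ((e + e' : ExpM n) : Coord n →₀ ℕ)
      = Finsupp.mapDomain (phi i j) e + Finsupp.mapDomain (phi i j) e' :=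
    Finsupp.mapDomain_add
  simp only [Dsingle, hmap, Finsupp.add_apply, Nat.add_eq_zero_iff]
  split_ifs <;> simp_all [AddMonoidAlgebra.single_mul_single]
  rfl

noncomputable def faceHom (i : Fin n) (j : ℕ) : Ch n →ₐ[ℚ] Ch n :=
  AddMonoidAlgebra.lift ℚ (Ch n) (ExpM n)
    { toFun := fun e => Dsingle i j e.toAdd
      map_one' := Dsingle_zero i j
      map_mul' := fun e e' => Dsingle_add i j e.toAdd e'.toAdd }

lemma D_eq_faceHom (i : Fin n) (j : ℕ) (a : Ch n) : D i j a = faceHom i j a := by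
  rw [faceHom, AddMonoidAlgebra.lift_apply]
  rfl

lemma D_prod {ι : Type*} (s : Finset ι) (i : Fin n) (j : ℕ) (f : ι → Ch n) :
    D i j (∏ m ∈ s, f m) = ∏ m ∈ s, D i j (f m) := by
  simp only [D_eq_faceHom, map_prod]

lemma D_single_one (i : Fin n) (j : ℕ) (e : ExpM n) :
    D i j (AddMonoidAlgebra.single e 1) = Dsingle i j e := by
  rw [D, AddMonoidAlgebra.coeff_single, Finsupp.sum_single_index] <;> simp

lemma phi_of_apply_eq_zero {i : Fin n} {v : Coord n} {j : ℕ} (h : v i = 0) :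
    phi i j v = v := by
  rw [phi, h, show cface j 0 = 0 by simp [cface], ← h, Function.update_eq_self]

lemma D_tv (i : Fin n) (j : ℕ) (v : Coord n) : D i j (tv v) = tv (phi i j v) := by
  by_cases hv : v = 0
  · rw [hv, phi_of_apply_eq_zero rfl, tv_zero, D_eq_faceHom, map_zero]
  · rw [tv, dif_neg hv, D_single_one, Dsingle]
    simp only [Finsupp.mapDomain_single, tv]
    by_cases hp : phi i j v = 0
    · simp [hp]
    · rw [dif_pos (Finsupp.single_eq_of_ne (Ne.symm hp)), dif_neg hp]

lemma inBox_add {b : Coord n} {e f : ExpM n} (he : inBox b e) (hf : inBox b f) :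
    inBox b (e + f) := fun c hc =>
  (Finset.mem_union.mp (Finsupp.support_add hc)).elim (he c) (hf c)

lemma one_mem_Deg (b : Coord n) : (1 : Ch n) ∈ Deg b :=
  Submodule.subset_span ⟨0, fun c hc => by simp [ExpM] at hc, rfl⟩

lemma mul_mem_Deg {b : Coord n} {x y : Ch n} (hx : x ∈ Deg b) (hy : y ∈ Deg b) :
    x * y ∈ Deg b := by
  have hmul := Submodule.mul_mem_mul hx hy
  rw [Deg, Submodule.span_mul_span] at hmul
  refine Submodule.span_mono ?_ hmul
  rintro _ ⟨_, ⟨e, he, rfl⟩, _, ⟨f, hf, rfl⟩, rfl⟩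
  exact ⟨e + f, inBox_add he hf, by simp [AddMonoidAlgebra.single_mul_single]⟩

lemma tv_mem_Deg {b v : Coord n} (h : ∀ i, v i ≤ b i) : tv v ∈ Deg b := by
  by_cases hv : v = 0
  · rw [hv, tv_zero]
    exact Submodule.zero_mem _
  · rw [tv, dif_neg hv]
    refine Submodule.subset_span ⟨_, fun c hc => ?_, rfl⟩
    rw [Finset.mem_singleton.mp (Finsupp.support_single_subset hc)]
    exact h

lemma prod_tv_mem_Deg {ι : Type*} (s : Finset ι) {b : Coord n} {v : ι → Coord n}
    (h : ∀ m i, v m i ≤ b i) : ∏ m ∈ s, tv (v m) ∈ Deg b :=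
  Finset.prod_induction _ (· ∈ Deg b) (fun _ _ => mul_mem_Deg) (one_mem_Deg b)
    fun m _ => tv_mem_Deg (h m)

lemma del_mem_bdry {i : Fin n} {z : Ch n} (hz : z ∈ Deg (Function.update (fun _ => 1) i 2)) :
    del i z ∈ bdry n :=
  Submodule.subset_span ⟨i, z, hz, rfl⟩

lemma del_eq_self_of_D_eq {i : Fin n} {z : Ch n} (hz : ∀ j, D i j z = z) : del i z = z := by
  rw [del, hz, hz, hz, sub_self, zero_add]

lemma Homologous.refl (x : Ch n) : Homologous x x := by
  rw [Homologous, sub_self]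
  exact Submodule.zero_mem _

lemma Homologous.trans {x y z : Ch n} (hxy : Homologous x y) (hyz : Homologous y z) :
    Homologous x z := by
  rw [Homologous, ← sub_add_sub_cancel x y z]
  exact Submodule.add_mem _ hxy hyz

lemma Homologous.sum {ι : Type*} (s : Finset ι) {f g : ι → Ch n}
    (h : ∀ m ∈ s, Homologous (f m) (g m)) : Homologous (∑ m ∈ s, f m) (∑ m ∈ s, g m) := by
  rw [Homologous, ← Finset.sum_sub_distrib]
  exact Submodule.sum_mem _ h

/-- For `0/1`-vectors `vₘ`, the values `c m = 0, 1, 2` replace the factor `t_{vₘ}` by its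
degeneration, itself, and its lift to circle-degree `2` in direction `i`. -/
noncomputable def prodScaleAt (i : Fin n) (v : Fin k → Coord n) (c : Fin k → ℕ) : Ch n :=
  ∏ m, tv (Function.update (v m) i (c m * v m i))

lemma D_prodScaleAt {i : Fin n} {v : Fin k → Coord n} (hv : ∀ m, v m i ≤ 1) (j : ℕ)
    (c : Fin k → ℕ) : D i j (prodScaleAt i v c) = prodScaleAt i v (fun m => cface j (c m)) := by
  rw [prodScaleAt, D_prod]
  refine Finset.prod_congr rfl fun m _ => ?_
  rw [D_tv, phi, Function.update_idem, Function.update_self]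
  rcases Nat.le_one_iff_eq_zero_or_eq_one.mp (hv m) with h | h <;>
    simp [h, cface]

lemma prodScaleAt_mem_Deg {i : Fin n} {v : Fin k → Coord n} (hv : ∀ m j, v m j ≤ 1)
    {c : Fin k → ℕ} (hc : ∀ m, c m ≤ 2) :
    prodScaleAt i v c ∈ Deg (Function.update (fun _ => 1) i 2) := by
  refine prod_tv_mem_Deg _ fun m j => ?_
  by_cases hj : j = i
  · subst hj
    simpa using Nat.mul_le_mul (hc m) (hv m j)
  · simpa [Function.update_apply, hj] using hv m j

/-- Splitting in direction `i`: the `i`-th coordinate of a product of `0/1`-monomials is moved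
entirely into one factor, in all possible ways. -/
theorem prod_tv_homologous_sum_prodScaleAt (i : Fin n) (v : Fin k → Coord n)
    (hv : ∀ m j, v m j ≤ 1) :
    Homologous (∏ m, tv (v m))
      (∑ r : Fin k, prodScaleAt i v (fun m => if m = r then 1 else 0)) := by
  let below (r : ℕ) : Fin k → ℕ := fun m => if (m : ℕ) < r then 1 else 0
  -- `z r` has faces `below r`, `below (r + 1)` and the `r`-th summand: the boundaries telescope
  let z (r : ℕ) : Ch n :=
    prodScaleAt i v fun m => if (m : ℕ) < r then 1 else if (m : ℕ) = r then 2 else 0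
  have hdel : ∀ r, del i (z r) = prodScaleAt i v (below r) - prodScaleAt i v (below (r + 1))
      + prodScaleAt i v (fun m => if (m : ℕ) = r then 1 else 0) := by
    intro r
    simp only [z, del, D_prodScaleAt (fun m => hv m i)]
    congr 3 <;> funext m <;> simp only [below, cface] <;> split_ifs <;> omega
  have hbelow_zero : del i (prodScaleAt i v (below 0)) = prodScaleAt i v (below 0) :=
    del_eq_self_of_D_eq fun j => by
      rw [D_prodScaleAt (fun m => hv m i)]
      simp [below, cface]
  have hbelow_k : prodScaleAt i v (below k) = ∏ m, tv (v m) := by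
    simp [prodScaleAt, below]
  have hsum : ∏ m, tv (v m) - ∑ r : Fin k, prodScaleAt i v (fun m => if m = r then 1 else 0)
      = del i (prodScaleAt i v (below 0)) - ∑ r ∈ Finset.range k, del i (z r) := by
    rw [Finset.sum_congr rfl fun r _ => hdel r, Finset.sum_add_distrib, Finset.sum_range_sub',
      hbelow_zero, ← hbelow_k,
      ← Fin.sum_univ_eq_sum_range fun r => prodScaleAt i v fun m => if (m : ℕ) = r then 1 else 0]
    simp only [Fin.val_inj]
    abel
  rw [Homologous, hsum]
  refine Submodule.sub_mem _ (del_mem_bdry (prodScaleAt_mem_Deg hv fun m => ?_))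
    (Submodule.sum_mem _ fun r _ => del_mem_bdry (prodScaleAt_mem_Deg hv fun m => ?_))
  · simp [below]
  · split_ifs <;> omega

def incidence (A : Fin n → Finset (Fin k)) (m : Fin k) : Coord n :=
  fun j => if m ∈ A j then 1 else 0

/-- `∏ₘ t_{g⁻¹(m)}`, writing a set of coordinates for its indicator vector. -/
noncomputable def prodFibers (g : Fin n → Fin k) : Ch n :=
  ∏ m, tv (incidence (fun j => {g j}) m)

lemma incidence_le_one (A : Fin n → Finset (Fin k)) (m : Fin k) (j : Fin n) :
    incidence A m j ≤ 1 := by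
  unfold incidence
  split_ifs <;> omega

lemma prodScaleAt_incidence (A : Fin n → Finset (Fin k)) (i : Fin n) (r : Fin k) :
    prodScaleAt i (incidence A) (fun m => if m = r then 1 else 0)
      = ∏ m, tv (incidence (Function.update A i ((A i).filter (· = r))) m) := by
  refine Finset.prod_congr rfl fun m _ => congrArg tv (funext fun j => ?_)
  by_cases hj : j = i
  · subst hj
    by_cases hm : m = r <;> simp [incidence, hm]
  · simp [incidence, hj]

lemma piFinset_update_filter_eq (A : Fin n → Finset (Fin k)) (i : Fin n) (r : Fin k) :
    Fintype.piFinset (Function.update A i ((A i).filter (· = r)))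
      = (Fintype.piFinset A).filter (fun g => g i = r) := by
  grind

lemma homologous_zero_of_incidence_eq_empty {A : Fin n → Finset (Fin k)} {i : Fin n}
    (hA : A i = ∅) : Homologous (∏ m, tv (incidence A m)) 0 := by
  have hfix : ∀ j, D i j (∏ m, tv (incidence A m)) = ∏ m, tv (incidence A m) := by
    intro j
    rw [D_prod]
    refine Finset.prod_congr rfl fun m _ => ?_
    rw [D_tv, phi_of_apply_eq_zero (by simp [incidence, hA])]
  rw [Homologous, sub_zero, ← del_eq_self_of_D_eq hfix]
  refine del_mem_bdry (prod_tv_mem_Deg _ fun m j => (incidence_le_one A m j).trans ?_)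
  by_cases hj : j = i <;> simp [hj]

lemma prod_incidence_homologous_of_card_le_one {A : Fin n → Finset (Fin k)}
    (hA : ∀ j, (A j).card ≤ 1) :
    Homologous (∏ m, tv (incidence A m))
      (∑ g ∈ Fintype.piFinset A, prodFibers g) := by
  by_cases hempty : ∃ i, A i = ∅
  · obtain ⟨i, hi⟩ := hempty
    rw [Fintype.piFinset_eq_empty.mpr ⟨i, hi⟩, Finset.sum_empty]
    exact homologous_zero_of_incidence_eq_empty hi
  · push Not at hempty
    choose g hg using fun j => Finset.card_eq_one.mp ((hA j).antisymm (hempty j).card_pos)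
    obtain rfl : A = fun j => {g j} := funext hg
    rw [Fintype.piFinset_singleton, Finset.sum_singleton]
    exact Homologous.refl _

theorem prod_incidence_homologous (A : Fin n → Finset (Fin k)) :
    Homologous (∏ m, tv (incidence A m))
      (∑ g ∈ Fintype.piFinset A, prodFibers g) := by
  suffices h : ∀ S : Finset (Fin n), ∀ A : Fin n → Finset (Fin k), (∀ j ∉ S, (A j).card ≤ 1) →
      Homologous (∏ m, tv (incidence A m))
        (∑ g ∈ Fintype.piFinset A, prodFibers g) from
    h Finset.univ A fun j hj => absurd (Finset.mem_univ j) hj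
  intro S
  induction S using Finset.induction_on with
  | empty =>
    exact fun A hA => prod_incidence_homologous_of_card_le_one fun j => hA j (Finset.notMem_empty j)
  | insert i S hiS ih =>
    intro A hA
    refine (prod_tv_homologous_sum_prodScaleAt i (incidence A) (incidence_le_one A)).trans ?_
    rw [← Finset.sum_fiberwise (Fintype.piFinset A) (fun g => g i)]
    refine Homologous.sum _ fun r _ => ?_
    rw [prodScaleAt_incidence, ← piFinset_update_filter_eq]
    refine ih _ fun j hj => ?_
    by_cases hji : j = i
    · subst hji
      simpa using Finset.card_le_one.mpr fun a ha b hb =>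
        (Finset.mem_filter.mp ha).2.trans (Finset.mem_filter.mp hb).2.symm
    · simpa [hji] using hA j (by simp [hji, hj])

theorem tv_one_pow_homologous_sum_prodFibers :
    Homologous (tv (fun _ => 1 : Coord n) ^ k) (∑ g : Fin n → Fin k, prodFibers g) := by
  have h := prod_incidence_homologous (fun _ : Fin n => (Finset.univ : Finset (Fin k)))
  have hinc : ∀ m, incidence (fun _ : Fin n => (Finset.univ : Finset (Fin k))) m = fun _ => 1 :=
    fun m => funext fun j => if_pos (Finset.mem_univ m)
  simpa only [Fintype.piFinset_univ, hinc, Finset.prod_const, Finset.card_univ,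
    Fintype.card_fin] using h

lemma prodFibers_eq_zero_of_not_surjective {g : Fin n → Fin k}
    (hg : ¬ Function.Surjective g) : prodFibers g = 0 := by
  simp only [Function.Surjective, not_forall, not_exists] at hg
  obtain ⟨m, hm⟩ := hg
  refine Finset.prod_eq_zero (Finset.mem_univ m) ?_
  convert tv_zero
  funext j
  simp [incidence, Ne.symm (hm j)]

lemma sum_prodFibers_eq_sum_surjective :
    ∑ g : Fin n → Fin k, prodFibers g
      = ∑ g ∈ (Finset.univ : Finset (Fin n → Fin k)).filter Function.Surjective, prodFibers g :=
  (Finset.sum_filter_of_ne fun _ _ h =>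
    not_imp_comm.mp prodFibers_eq_zero_of_not_surjective h).symm

lemma sum_prodFibers_eq_zero_of_lt (h : n < k) : ∑ g : Fin n → Fin k, prodFibers g = 0 :=
  Finset.sum_eq_zero fun g _ => prodFibers_eq_zero_of_not_surjective fun hg => by
    have := Fintype.card_le_of_surjective g hg
    simp only [Fintype.card_fin] at this
    omega

lemma prodFibers_perm (σ : Equiv.Perm (Fin n)) :
    prodFibers σ = ∏ i : Fin n, tv (fun j => if j = i then 1 else 0) := by
  rw [prodFibers, ← Equiv.prod_comp σ.symm (fun i => tv (fun j => if j = i then 1 else 0))]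
  refine Finset.prod_congr rfl fun m _ => congrArg tv (funext fun j => ?_)
  simp [incidence, Equiv.eq_symm_apply, eq_comm]

lemma sum_surjective_eq_sum_perm {M : Type*} [AddCommMonoid M] (f : (Fin n → Fin n) → M) :
    ∑ g ∈ (Finset.univ : Finset (Fin n → Fin n)).filter Function.Surjective, f g
      = ∑ σ : Equiv.Perm (Fin n), f σ := by
  refine (Finset.sum_nbij (fun σ : Equiv.Perm (Fin n) => (σ : Fin n → Fin n))
    (fun σ _ => Finset.mem_filter.mpr ⟨Finset.mem_univ _, σ.surjective⟩)
    DFunLike.coe_injective.injOn (fun g hg => ?_) (fun _ _ => rfl)).symm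
  have hg : Function.Surjective g := (Finset.mem_filter.mp hg).2
  exact ⟨Equiv.ofBijective g ⟨Finite.injective_iff_surjective.mpr hg, hg⟩,
    Finset.mem_coe.mpr (Finset.mem_univ _), rfl⟩

lemma sum_prodFibers_eq_factorial_smul :
    ∑ g : Fin n → Fin n, prodFibers g
      = n.factorial • ∏ i : Fin n, tv (fun j => if j = i then 1 else 0) := by
  rw [sum_prodFibers_eq_sum_surjective, sum_surjective_eq_sum_perm]
  simp only [prodFibers_perm, Finset.sum_const, Finset.card_univ, Fintype.card_perm,
    Fintype.card_fin]

lemma sum_fin_two_val_eq_one_iff (c : Fin k → Fin 2) :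
    ∑ m, (c m : ℕ) = 1 ↔ ∃ r, ∀ m, c m = if m = r then 1 else 0 := by
  have hval : ∀ x : Fin 2, (x : ℕ) = if x = 1 then 1 else 0 := by decide
  have hfin : ∀ (x : Fin 2) (p : Prop) [Decidable p],
      (x = if p then 1 else 0) ↔ (x = 1 ↔ p) := by
    intro x p _
    by_cases hp : p <;> simp [hp]; omega
  simp only [hval, Finset.sum_boole, Nat.cast_id, Finset.card_eq_one,
    Finset.eq_singleton_iff_unique_mem, hfin, Finset.mem_filter, Finset.mem_univ, true_and]
  exact ⟨fun ⟨r, hr, h⟩ => ⟨r, fun m => ⟨h m, fun e => e ▸ hr⟩⟩,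
    fun ⟨r, h⟩ => ⟨r, (h r).2 rfl, fun m => (h m).1⟩⟩

lemma sum_prodFibers_eq_sum_matrices :
    ∑ g : Fin n → Fin k, prodFibers g
      = ∑ W ∈ Finset.univ.filter (fun W : Fin k → (Fin n → Fin 2) =>
            (∀ i, W i ≠ 0) ∧ ∀ j, (∑ i, ((W i j : ℕ))) = 1),
          ∏ i, tv (fun j => (W i j : ℕ)) := by
  rw [sum_prodFibers_eq_sum_surjective]
  refine Finset.sum_nbij (fun g m j => if m = g j then 1 else 0) (fun g hg => ?_)
    (fun g _ g' _ h => ?_) (fun W hW => ?_) (fun g _ => ?_)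
  · obtain ⟨-, hsurj⟩ := Finset.mem_filter.mp hg
    refine Finset.mem_filter.mpr ⟨Finset.mem_univ _, fun m hm => ?_, fun j => ?_⟩
    · obtain ⟨j, rfl⟩ := hsurj m
      simpa using congrFun hm j
    · exact (sum_fin_two_val_eq_one_iff _).mpr ⟨g j, fun m => rfl⟩
  · funext j
    simpa using (congrFun (congrFun h (g j)) j).symm
  · obtain ⟨-, hrow, hcol⟩ := Finset.mem_filter.mp hW
    choose g hg using fun j => (sum_fin_two_val_eq_one_iff fun m => W m j).mp (hcol j)
    have hsurj : Function.Surjective g := fun m => by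
      obtain ⟨j, hj⟩ := Function.ne_iff.mp (hrow m)
      exact ⟨j, by_contra fun h => hj (by simp [hg j m, Ne.symm h])⟩
    exact ⟨g, by simpa using hsurj, funext fun m => funext fun j => (hg j m).symm⟩
  · refine Finset.prod_congr rfl fun m _ => congrArg tv (funext fun j => ?_)
    simp only [incidence, Finset.mem_singleton]
    split_ifs <;> rfl

end

theorem diagonal_class_relation_general (n k : ℕ) :
    Homologous (elem ((fun _ => 1) : Coord n) ((Polynomial.X : Polynomial ℚ) ^ k))
      (∑ W ∈ Finset.univ.filter
          (fun W : Fin k → (Fin n → Fin 2) =>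
            (∀ i, W i ≠ 0) ∧ ∀ j, (∑ i, ((W i j : ℕ))) = 1),
        ∏ i, elem (fun j => (W i j : ℕ)) (Polynomial.X : Polynomial ℚ)) ∧
    (k = n →
      Homologous (elem ((fun _ => 1) : Coord n) ((Polynomial.X : Polynomial ℚ) ^ n))
        (n.factorial •
          ∏ i : Fin n, elem (fun j => if j = i then 1 else 0)
            (Polynomial.X : Polynomial ℚ))) ∧
    (n < k →
      Homologous (elem ((fun _ => 1) : Coord n) ((Polynomial.X : Polynomial ℚ) ^ k)) 0) := by
  simp only [elem_X_pow, elem_X]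
  refine ⟨?_, fun _ => ?_, fun hnk => ?_⟩
  · rw [← sum_prodFibers_eq_sum_matrices]
    exact tv_one_pow_homologous_sum_prodFibers
  · rw [← sum_prodFibers_eq_factorial_smul]
    exact tv_one_pow_homologous_sum_prodFibers
  · rw [← sum_prodFibers_eq_zero_of_lt hnk]
    exact tv_one_pow_homologous_sum_prodFibers

theorem diagonal_class_relation (n k : ℕ) (hk : 1 ≤ k) :
    Homologous (elem ((fun _ => 1) : Coord n) ((Polynomial.X : Polynomial ℚ) ^ k))
      (∑ W ∈ Finset.univ.filter
          (fun W : Fin k → (Fin n → Fin 2) =>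
            (∀ i, W i ≠ 0) ∧ ∀ j, (∑ i, ((W i j : ℕ))) = 1),
        ∏ i, elem (fun j => (W i j : ℕ)) (Polynomial.X : Polynomial ℚ)) ∧
    (k = n →
      Homologous (elem ((fun _ => 1) : Coord n) ((Polynomial.X : Polynomial ℚ) ^ n))
        (n.factorial •
          ∏ i : Fin n, elem (fun j => if j = i then 1 else 0)
            (Polynomial.X : Polynomial ℚ))) ∧
    (n < k →
      Homologous (elem ((fun _ => 1) : Coord n) ((Polynomial.X : Polynomial ℚ) ^ k)) 0) :=
  diagonal_class_relation_general n k
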